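/- Let -∞ ≤ a < b ≤ ∞, let α > 0, let n ∈ ℤ, let {x_k}_{k=n}^∞ ⊂ (a,b) be a strictly increasing sequence, and let {τ_k}_{k=n+1}^∞ be a geometrically decreasing sequence of positive numbers, i.e. sup_{k≥n+1} τ_{k+1}/τ_k < 1. Then there exist positive constants c₁, c₂ (depending only on α and the geometric decay ratio) such that for every nonnegative measurable function g on (a,b): c₁ · Σ_{k=n+1}^∞ τ_k (∫_{x_{k-1}}^{x_k} g)^α ≤ Σ_{k=n+1}^∞ τ_k (∫_{x_n}^{x_k} g)^α ≤ c₂ · Σ_{k=n+1}^∞ τ_k (∫_{x_{k-1}}^{x_k} g)^α. -/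

import Mathlib

/-!
The lower bound holds with `c₁ = 1`, since `(x_{k-1}, x_k) ⊆ (x_n, x_k)`. For the upper bound,
`∫_{x_n}^{x_k} g` is the sum of the pieces `A_j = ∫_{x_{j-1}}^{x_j} g`, `j ≤ k`. Fix `σ < 1` with
`ρ < σ^α` and write `A_j = σ^{k-j} (σ^{-(k-j)} A_j)`: bounding this weighted sum by its largest
term gives `(∑_{j ≤ k} A_j)^α ≤ (1 - σ)^{-α} ∑_{j ≤ k} σ^{-α(k-j)} A_j^α`. As `τ_k ≤ ρ^{k-j} τ_j`,
summing over `k` leaves, for each `j`, the geometric series `∑_m (ρ / σ^α)^m < ∞`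
(a Cauchy product).
-/

open MeasureTheory ENNReal Set

noncomputable section

/-- The open interval `(a, b)` of real numbers, with extended-real endpoints. -/
def Iab (a b : EReal) : Set ℝ := {x : ℝ | a < (x : EReal) ∧ (x : EReal) < b}

theorem tsum_subtype_succ_le_eq_tsum_nat {M : Type*} [AddCommMonoid M] [TopologicalSpace M]
    (n : ℤ) (f : {k : ℤ // n + 1 ≤ k} → M) :
    ∑' k, f k = ∑' i : ℕ, f ⟨n + i + 1, by omega⟩ :=
  let e : ℕ ≃ {k : ℤ // n + 1 ≤ k} :=
    { toFun i := ⟨n + i + 1, by omega⟩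
      invFun k := (k.1 - (n + 1)).toNat
      left_inv i := by simp only; omega
      right_inv k := Subtype.ext (by have := k.2; simp only; omega) }
  (e.tsum_eq f).symm

theorem sum_setLIntegral_Ioc_adjacent_intervals {β : Type*} [LinearOrder β] [TopologicalSpace β]
    [OrderClosedTopology β] [MeasurableSpace β] [OpensMeasurableSpace β] (μ : Measure β)
    (f : β → ℝ≥0∞) {y : ℕ → β} (hy : Monotone y) (i : ℕ) :
    ∑ j ∈ Finset.range i, ∫⁻ s in Ioc (y j) (y (j + 1)), f s ∂μ =
      ∫⁻ s in Ioc (y 0) (y i), f s ∂μ := by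
  induction i with
  | zero => simp
  | succ i ih =>
    rw [Finset.sum_range_succ, ih, ← lintegral_union measurableSet_Ioc
      (Ioc_disjoint_Ioc_of_le le_rfl), Ioc_union_Ioc_eq_Ioc (hy i.zero_le) (hy i.le_succ)]

namespace ENNReal

open Finset in
theorem tsum_mul_tsum_eq_tsum_sum_range (f g : ℕ → ℝ≥0∞) :
    (∑' n, f n) * ∑' n, g n = ∑' n, ∑ k ∈ range (n + 1), f k * g (n - k) := by
  simp_rw [← Nat.sum_antidiagonal_eq_sum_range_succ fun k l => f k * g l]
  calc (∑' n, f n) * ∑' n, g n = ∑' p : ℕ × ℕ, f p.1 * g p.2 := by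
        rw [ENNReal.tsum_prod (f := fun k l => f k * g l), ← ENNReal.tsum_mul_right]
        simp_rw [ENNReal.tsum_mul_left]
    _ = ∑' x : Σ n : ℕ, antidiagonal n, f x.2.1.1 * g x.2.1.2 :=
        (HasAntidiagonal.sigmaAntidiagonalEquivProd.tsum_eq fun p : ℕ × ℕ => f p.1 * g p.2).symm
    _ = _ := by
        rw [ENNReal.tsum_sigma']
        simp_rw [tsum_fintype, sum_coe_sort (antidiagonal _) (fun p => f p.1 * g p.2)]

theorem rpow_sum_mul_le {ι : Type*} (s : Finset ι) (w b : ι → ℝ≥0∞) {α : ℝ} (hα : 0 < α) :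
    (∑ j ∈ s, w j * b j) ^ α ≤ (∑ j ∈ s, w j) ^ α * ∑ j ∈ s, b j ^ α := by
  rcases s.eq_empty_or_nonempty with rfl | hs
  · simp [zero_rpow_of_pos hα]
  obtain ⟨j₀, hj₀, hmax⟩ := s.exists_max_image b hs
  calc (∑ j ∈ s, w j * b j) ^ α ≤ (∑ j ∈ s, w j * b j₀) ^ α := by
        gcongr with j hj; exact hmax j hj
    _ = (∑ j ∈ s, w j) ^ α * b j₀ ^ α := by rw [← Finset.sum_mul, mul_rpow_of_nonneg _ _ hα.le]
    _ ≤ (∑ j ∈ s, w j) ^ α * ∑ j ∈ s, b j ^ α := by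
        gcongr; exact Finset.single_le_sum (f := (b · ^ α)) (fun _ _ => zero_le) hj₀

theorem le_pow_mul_of_le_mul_succ {t : ℕ → ℝ≥0∞} {ρ : ℝ≥0∞} (ht : ∀ i, t (i + 1) ≤ ρ * t i)
    (j m : ℕ) : t (j + m) ≤ ρ ^ m * t j := by
  induction m with
  | zero => simp
  | succ m ih =>
    calc t (j + (m + 1)) ≤ ρ * t (j + m) := ht (j + m)
      _ ≤ ρ * (ρ ^ m * t j) := by gcongr
      _ = ρ ^ (m + 1) * t j := by ring

theorem rpow_sum_range_le {α : ℝ} (hα : 0 < α) {σ : ℝ≥0∞} (hσ₀ : 0 < σ) (hσ₁ : σ < 1)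
    (a : ℕ → ℝ≥0∞) (i : ℕ) :
    (∑ j ∈ Finset.range (i + 1), a j) ^ α ≤
      (1 - σ)⁻¹ ^ α * ∑ j ∈ Finset.range (i + 1), (σ ^ α)⁻¹ ^ (i - j) * a j ^ α := by
  have hσtop : σ ≠ ∞ := (hσ₁.trans one_lt_top).ne
  have hsplit : ∀ j, a j = σ ^ (i - j) * (σ⁻¹ ^ (i - j) * a j) := fun j => by
    rw [← mul_assoc, ← mul_pow, ENNReal.mul_inv_cancel hσ₀.ne' hσtop, one_pow, one_mul]
  have hweights : ∑ j ∈ Finset.range (i + 1), σ ^ (i - j) ≤ (1 - σ)⁻¹ := by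
    calc ∑ j ∈ Finset.range (i + 1), σ ^ (i - j) = ∑ j ∈ Finset.range (i + 1), σ ^ j := by
          simpa using Finset.sum_range_reflect (σ ^ ·) (i + 1)
      _ ≤ ∑' j, σ ^ j := ENNReal.sum_le_tsum _
      _ = (1 - σ)⁻¹ := tsum_geometric σ
  calc (∑ j ∈ Finset.range (i + 1), a j) ^ α
      = (∑ j ∈ Finset.range (i + 1), σ ^ (i - j) * (σ⁻¹ ^ (i - j) * a j)) ^ α := by
        simp_rw [← hsplit]
    _ ≤ (∑ j ∈ Finset.range (i + 1), σ ^ (i - j)) ^ α *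
          ∑ j ∈ Finset.range (i + 1), (σ⁻¹ ^ (i - j) * a j) ^ α := rpow_sum_mul_le _ _ _ hα
    _ ≤ (1 - σ)⁻¹ ^ α * ∑ j ∈ Finset.range (i + 1), (σ ^ α)⁻¹ ^ (i - j) * a j ^ α := by
        gcongr with j
        rw [mul_rpow_of_nonneg _ _ hα.le, ← rpow_natCast_mul, mul_comm (_ : ℝ), rpow_mul_natCast,
          inv_rpow, mul_comm]

theorem tsum_mul_rpow_sum_range_le {α : ℝ} (hα : 0 < α) {σ ρ : ℝ≥0∞} (hσ₀ : 0 < σ)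
    (hσ₁ : σ < 1) {t : ℕ → ℝ≥0∞} (ht : ∀ i, t (i + 1) ≤ ρ * t i) (a : ℕ → ℝ≥0∞) :
    ∑' i, t i * (∑ j ∈ Finset.range (i + 1), a j) ^ α ≤
      (1 - σ)⁻¹ ^ α * (1 - ρ / σ ^ α)⁻¹ * ∑' j, t j * a j ^ α := by
  set ψ := (σ ^ α)⁻¹
  have hdecay : ∀ i j, j ∈ Finset.range (i + 1) →
      t i * (ψ ^ (i - j) * a j ^ α) ≤ t j * a j ^ α * (ρ * ψ) ^ (i - j) := fun i j hj => by
    have hti : t i ≤ ρ ^ (i - j) * t j := by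
      simpa [Nat.add_sub_cancel' (Finset.mem_range_succ_iff.mp hj)] using
        le_pow_mul_of_le_mul_succ ht j (i - j)
    calc t i * (ψ ^ (i - j) * a j ^ α) ≤ ρ ^ (i - j) * t j * (ψ ^ (i - j) * a j ^ α) := by gcongr
      _ = t j * a j ^ α * (ρ * ψ) ^ (i - j) := by ring
  calc ∑' i, t i * (∑ j ∈ Finset.range (i + 1), a j) ^ α
      ≤ ∑' i, t i * ((1 - σ)⁻¹ ^ α * ∑ j ∈ Finset.range (i + 1), ψ ^ (i - j) * a j ^ α) := by
        gcongr with i; exact rpow_sum_range_le hα hσ₀ hσ₁ a i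
    _ = (1 - σ)⁻¹ ^ α * ∑' i, ∑ j ∈ Finset.range (i + 1), t i * (ψ ^ (i - j) * a j ^ α) := by
        simp_rw [← ENNReal.tsum_mul_left, Finset.mul_sum, mul_left_comm]
    _ ≤ (1 - σ)⁻¹ ^ α * ∑' i, ∑ j ∈ Finset.range (i + 1), t j * a j ^ α * (ρ * ψ) ^ (i - j) := by
        gcongr (1 - σ)⁻¹ ^ α * ∑' i, ?_ with i; exact Finset.sum_le_sum (hdecay i)
    _ = (1 - σ)⁻¹ ^ α * ((∑' j, t j * a j ^ α) * ∑' m, (ρ * ψ) ^ m) := by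
        rw [tsum_mul_tsum_eq_tsum_sum_range]
    _ = (1 - σ)⁻¹ ^ α * (1 - ρ / σ ^ α)⁻¹ * ∑' j, t j * a j ^ α := by
        rw [tsum_geometric, div_eq_mul_inv]; ring

theorem exists_pos_lt_one_lt_rpow {α : ℝ} (hα : 0 < α) {ρ : ℝ≥0∞} (hρ : ρ < 1) :
    ∃ σ : ℝ≥0∞, 0 < σ ∧ σ < 1 ∧ ρ < σ ^ α := by
  obtain ⟨θ, hρθ, hθ⟩ := exists_between hρ
  refine ⟨θ ^ α⁻¹, rpow_pos (pos_of_gt hρθ) (hθ.trans one_lt_top).ne,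
    rpow_lt_one hθ (inv_pos.mpr hα), ?_⟩
  rwa [← rpow_mul, inv_mul_cancel₀ hα.ne', rpow_one]

end ENNReal

section MonotoneNodes

variable {x : ℕ → ℝ} (hx : Monotone x) (t : ℕ → ℝ≥0∞) (g : ℝ → ℝ≥0∞) {α : ℝ}
include hx

theorem sum_setLIntegral_Ioo_adjacent_intervals (i : ℕ) :
    ∑ j ∈ Finset.range i, ∫⁻ s in Ioo (x j) (x (j + 1)), g s = ∫⁻ s in Ioo (x 0) (x i), g s := by
  simp only [setLIntegral_congr Ioo_ae_eq_Ioc]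
  exact sum_setLIntegral_Ioc_adjacent_intervals _ g hx i

theorem tsum_mul_rpow_lintegral_adjacent_le_initial (hα : 0 ≤ α) :
    ∑' i, t i * (∫⁻ s in Ioo (x i) (x (i + 1)), g s) ^ α ≤
      ∑' i, t i * (∫⁻ s in Ioo (x 0) (x (i + 1)), g s) ^ α := by
  gcongr with i
  exact hx i.zero_le

theorem tsum_mul_rpow_lintegral_initial_le_adjacent (hα : 0 < α) {σ ρ : ℝ≥0∞} (hσ₀ : 0 < σ)
    (hσ₁ : σ < 1) (ht : ∀ i, t (i + 1) ≤ ρ * t i) :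
    ∑' i, t i * (∫⁻ s in Ioo (x 0) (x (i + 1)), g s) ^ α ≤
      (1 - σ)⁻¹ ^ α * (1 - ρ / σ ^ α)⁻¹ *
        ∑' i, t i * (∫⁻ s in Ioo (x i) (x (i + 1)), g s) ^ α := by
  simp only [← sum_setLIntegral_Ioo_adjacent_intervals hx]
  exact ENNReal.tsum_mul_rpow_sum_range_le hα hσ₀ hσ₁ ht _

end MonotoneNodes

theorem statement9 (α : ℝ) (hα : 0 < α) (ρ : ℝ≥0∞) (hρ : ρ < 1) :
    ∃ c₁ c₂ : ℝ≥0∞, 0 < c₁ ∧ c₂ < ∞ ∧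
      ∀ (a b : EReal), a < b →
      ∀ (n : ℤ) (x : ℤ → ℝ) (τ : ℤ → ℝ≥0∞),
        (∀ k, n ≤ k → x k ∈ Iab a b) →
        (∀ k, n ≤ k → x k < x (k + 1)) →
        (∀ k, n + 1 ≤ k → 0 < τ k ∧ τ k < ∞) →
        (∀ k, n + 1 ≤ k → τ (k + 1) ≤ ρ * τ k) →
        ∀ g : ℝ → ℝ≥0∞, Measurable g →
          c₁ * (∑' k : {k : ℤ // n + 1 ≤ k},
                τ k.1 * (∫⁻ s in Ioo (x (k.1 - 1)) (x k.1), g s) ^ α) ≤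
              (∑' k : {k : ℤ // n + 1 ≤ k},
                τ k.1 * (∫⁻ s in Ioo (x n) (x k.1), g s) ^ α) ∧
            (∑' k : {k : ℤ // n + 1 ≤ k},
                τ k.1 * (∫⁻ s in Ioo (x n) (x k.1), g s) ^ α) ≤
              c₂ * ∑' k : {k : ℤ // n + 1 ≤ k},
                τ k.1 * (∫⁻ s in Ioo (x (k.1 - 1)) (x k.1), g s) ^ α := by
  obtain ⟨σ, hσ₀, hσ₁, hρσ⟩ := ENNReal.exists_pos_lt_one_lt_rpow hα hρ
  refine ⟨1, (1 - σ)⁻¹ ^ α * (1 - ρ / σ ^ α)⁻¹, one_pos, ?_, ?_⟩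
  · exact mul_lt_top (rpow_lt_top_of_nonneg hα.le (inv_ne_top.2 (tsub_pos_of_lt hσ₁).ne'))
      (inv_lt_top.2 (tsub_pos_of_lt (div_lt_of_lt_mul (by rwa [one_mul]))))
  intro a b _ n x τ _ hx _ hτ g _
  have hy : Monotone fun i : ℕ => x (n + i) := monotone_nat_of_le_succ fun i => by
    simpa [add_assoc] using (hx (n + i) (by omega)).le
  have ht : ∀ i : ℕ, τ (n + ↑(i + 1) + 1) ≤ ρ * τ (n + i + 1) := fun i => by
    simpa [add_assoc] using hτ (n + i + 1) (by omega)
  set t : ℕ → ℝ≥0∞ := fun i => τ (n + i + 1)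
  have hlow := tsum_mul_rpow_lintegral_adjacent_le_initial hy t g hα.le
  have hup := tsum_mul_rpow_lintegral_initial_le_adjacent hy t g hα hσ₀ hσ₁ ht
  push_cast [← add_assoc, add_zero] at hlow hup
  simpa only [tsum_subtype_succ_le_eq_tsum_nat, add_sub_cancel_right, one_mul] using ⟨hlow, hup⟩
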